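/- For every p ∈ [1,∞] and every q ∈ [1,∞), the map sending a persistence diagram to its persistence landscape is not Hölder continuous from (persistence diagrams, W_p) to (landscapes, L^q): for all constants C > 0 and α > 0 there exist persistence diagrams X and Y such that ‖λ_X − λ_Y‖_q > C · W_p(X,Y)^α. -/

import Mathlib

open scoped ENNReal

noncomputable section

/-- The ℓ^p norm on ℝ², for `p ∈ [1, ∞]`. -/
def lpNorm2 (p : ℝ≥0∞) (z : ℝ × ℝ) : ℝ :=
  if p = ∞ then max |z.1| |z.2|
  else (|z.1| ^ p.toReal + |z.2| ^ p.toReal) ^ (1 / p.toReal)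

/-- The ℓ^p distance from a point of ℝ² to the diagonal `Δ = {(t,t)}`. -/
def diagDist (p : ℝ≥0∞) (z : ℝ × ℝ) : ℝ :=
  ⨅ t : ℝ, lpNorm2 p (z.1 - t, z.2 - t)

/-- A persistence diagram: a finite multiset of points `(b, d)` of ℝ² with `b < d`. -/
def IsDiagram (X : Multiset (ℝ × ℝ)) : Prop :=
  ∀ z ∈ X, z.1 < z.2

/-- A matching between two diagrams `X` and `Y`: some points of `X` are paired bijectively
with points of `Y`, and every remaining point of `X` or `Y` is left unmatched (assigned to
the diagonal). -/
structure Matching (X Y : Multiset (ℝ × ℝ)) where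
  pairs : Multiset ((ℝ × ℝ) × (ℝ × ℝ))
  unmatchedX : Multiset (ℝ × ℝ)
  unmatchedY : Multiset (ℝ × ℝ)
  fst_eq : pairs.map Prod.fst + unmatchedX = X
  snd_eq : pairs.map Prod.snd + unmatchedY = Y

/-- The ℓ^p displacement of a matched pair. -/
def pairDisp (p : ℝ≥0∞) (c : (ℝ × ℝ) × (ℝ × ℝ)) : ℝ :=
  lpNorm2 p (c.1.1 - c.2.1, c.1.2 - c.2.2)

/-- The `p`-cost of a matching: for `p < ∞` it is
`(∑_{matched pairs} ‖x − y‖_p^p + ∑_{unmatched z} dist_p(z,Δ)^p)^{1/p}`; for `p = ∞` it is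
the maximum displacement (over matched pairs and unmatched points). -/
def Matching.cost (p : ℝ≥0∞) {X Y : Multiset (ℝ × ℝ)} (M : Matching X Y) : ℝ :=
  if p = ∞ then
    sSup (insert (0 : ℝ)
      {r : ℝ | r ∈ M.pairs.map (pairDisp ∞) + (M.unmatchedX + M.unmatchedY).map (diagDist ∞)})
  else
    ((M.pairs.map fun c => pairDisp p c ^ p.toReal).sum +
      ((M.unmatchedX + M.unmatchedY).map fun z => diagDist p z ^ p.toReal).sum) ^ (1 / p.toReal)

/-- The `p`-Wasserstein distance between two persistence diagrams (bottleneck distance for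
`p = ∞`): the infimum of the `p`-cost over all matchings. -/
def wassersteinDist (p : ℝ≥0∞) (X Y : Multiset (ℝ × ℝ)) : ℝ :=
  sInf {c : ℝ | ∃ M : Matching X Y, c = M.cost p}

end

open MeasureTheory

/-- The persistence landscape of a diagram `X`: `λ_X(k,t)` is the `k`-th largest element of
the multiset `{max(0, min(t − b, d − t)) : (b,d) ∈ X}` (and `0` if `X` has fewer than `k`
points).  Here the values are sorted in decreasing order and the `k`-th one is taken. -/
noncomputable def landscape (X : Multiset (ℝ × ℝ)) (k : ℕ) (t : ℝ) : ℝ :=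
  (((X.map fun z => max 0 (min (t - z.1) (z.2 - t))).sort (· ≤ ·)).reverse.getD (k - 1) 0)

/-- The `L^q` distance between the persistence landscapes of two diagrams:
`‖λ_X − λ_Y‖_q = (∑_{k ≥ 1} ∫_ℝ |λ_X(k,t) − λ_Y(k,t)|^q dt)^{1/q}`. -/
noncomputable def landscapeDist (q : ℝ) (X Y : Multiset (ℝ × ℝ)) : ℝ :=
  (∑' k : ℕ, ∫ t : ℝ, |landscape X (k + 1) t - landscape Y (k + 1) t| ^ q) ^ (1 / q)

/-! Both diagrams are the single long bar `(0, A)`, one of them shifted by `1` at its birth, so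
their Wasserstein distance is at most `1` whatever `A` is. Their first landscapes are tents that
differ by exactly `1` on `[1, A/2]`, so the landscape distance is at least `(A/2 - 1)^{1/q}`,
which is unbounded in `A`. -/

open Set

lemma isDiagram_singleton {z : ℝ × ℝ} (hz : z.1 < z.2) : IsDiagram {z} := by
  intro w hw
  rwa [Multiset.mem_singleton.1 hw]

section Wasserstein

variable {p : ℝ≥0∞}

lemma lpNorm2_nonneg (p : ℝ≥0∞) (z : ℝ × ℝ) : 0 ≤ lpNorm2 p z := by
  unfold lpNorm2
  split
  · exact le_max_of_le_left (abs_nonneg _)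
  · positivity

lemma lpNorm2_snd_zero (hp : p ≠ 0) (a : ℝ) : lpNorm2 p (a, 0) = |a| := by
  unfold lpNorm2
  split_ifs with hpi
  · simp
  · have hpos : 0 < p.toReal := ENNReal.toReal_pos hp hpi
    rw [abs_zero, Real.zero_rpow hpos.ne', add_zero, one_div,
      Real.rpow_rpow_inv (abs_nonneg a) hpos.ne']

lemma diagDist_nonneg (p : ℝ≥0∞) (z : ℝ × ℝ) : 0 ≤ diagDist p z :=
  Real.iInf_nonneg fun _ => lpNorm2_nonneg p _

lemma Matching.cost_nonneg (p : ℝ≥0∞) {X Y : Multiset (ℝ × ℝ)} (M : Matching X Y) :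
    0 ≤ M.cost p := by
  unfold Matching.cost
  split
  · by_cases hb : BddAbove (insert (0 : ℝ)
      {r : ℝ | r ∈ M.pairs.map (pairDisp ∞) + (M.unmatchedX + M.unmatchedY).map (diagDist ∞)})
    · exact le_csSup hb (mem_insert _ _)
    · rw [Real.sSup_of_not_bddAbove hb]
  · refine Real.rpow_nonneg (add_nonneg (Multiset.sum_nonneg ?_) (Multiset.sum_nonneg ?_)) _
    · simp only [Multiset.mem_map]
      rintro _ ⟨c, -, rfl⟩
      exact Real.rpow_nonneg (lpNorm2_nonneg _ _) _
    · simp only [Multiset.mem_map]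
      rintro _ ⟨z, -, rfl⟩
      exact Real.rpow_nonneg (diagDist_nonneg _ _) _

def Matching.single (x y : ℝ × ℝ) : Matching {x} {y} :=
  ⟨{(x, y)}, 0, 0, by simp, by simp⟩

lemma Matching.cost_single (hp : p ≠ 0) (x y : ℝ × ℝ) :
    (Matching.single x y).cost p = pairDisp p (x, y) := by
  have hd : 0 ≤ pairDisp p (x, y) := lpNorm2_nonneg _ _
  unfold Matching.cost
  split_ifs with hpi
  · subst hpi
    have hset : {r : ℝ | r ∈ (Matching.single x y).pairs.map (pairDisp ∞) +
        ((Matching.single x y).unmatchedX + (Matching.single x y).unmatchedY).map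
          (diagDist ∞)} = {pairDisp ∞ (x, y)} := by
      ext r
      simp [Matching.single]
    rw [hset, csSup_pair, max_eq_right hd]
  · have hpos : 0 < p.toReal := ENNReal.toReal_pos hp hpi
    simp only [Matching.single, Multiset.map_singleton, Multiset.sum_singleton, add_zero,
      Multiset.map_zero, Multiset.sum_zero]
    rw [one_div, Real.rpow_rpow_inv hd hpos.ne']

lemma wassersteinDist_nonneg (p : ℝ≥0∞) (X Y : Multiset (ℝ × ℝ)) :
    0 ≤ wassersteinDist p X Y :=
  Real.sInf_nonneg <| by
    rintro _ ⟨M, rfl⟩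
    exact M.cost_nonneg p

lemma wassersteinDist_le_cost {X Y : Multiset (ℝ × ℝ)} (M : Matching X Y) :
    wassersteinDist p X Y ≤ M.cost p :=
  csInf_le ⟨0, by rintro _ ⟨M, rfl⟩; exact M.cost_nonneg p⟩ ⟨M, rfl⟩

lemma wassersteinDist_singleton_shift_le_one (hp : p ≠ 0) (b d : ℝ) :
    wassersteinDist p {(b, d)} {(b + 1, d)} ≤ 1 := by
  calc wassersteinDist p {(b, d)} {(b + 1, d)}
      ≤ (Matching.single (b, d) (b + 1, d)).cost p := wassersteinDist_le_cost _
    _ = 1 := by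
      rw [Matching.cost_single hp, pairDisp, sub_self, lpNorm2_snd_zero hp]
      norm_num

end Wasserstein

section Landscape

def tent (z : ℝ × ℝ) (t : ℝ) : ℝ := max 0 (min (t - z.1) (z.2 - t))

lemma continuous_tent (z : ℝ × ℝ) : Continuous (tent z) := by
  unfold tent
  fun_prop

lemma tent_eq_zero_of_notMem {z : ℝ × ℝ} {t : ℝ} (ht : t ∉ Icc z.1 z.2) : tent z t = 0 := by
  rw [mem_Icc, not_and_or, not_le, not_le] at ht
  apply max_eq_left
  rcases ht with ht | ht
  · exact (min_le_left _ _).trans (by linarith)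
  · exact (min_le_right _ _).trans (by linarith)

lemma tent_of_mem_Icc {b d t : ℝ} (ht : t ∈ Icc b ((b + d) / 2)) : tent (b, d) t = t - b := by
  obtain ⟨hbt, htd⟩ := ht
  rw [tent, min_eq_left (by linarith), max_eq_right (by linarith)]

lemma tent_sub_tent_of_mem_Icc {b b' d t : ℝ} (hb : b ≤ b') (ht : t ∈ Icc b' ((b + d) / 2)) :
    tent (b, d) t - tent (b', d) t = b' - b := by
  obtain ⟨hbt, htd⟩ := ht
  rw [tent_of_mem_Icc ⟨by linarith, htd⟩, tent_of_mem_Icc ⟨hbt, by linarith⟩]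
  ring

lemma integrable_abs_tent_sub_tent_rpow {q : ℝ} (hq : 0 < q) (x y : ℝ × ℝ) :
    Integrable fun t => |tent x t - tent y t| ^ q := by
  refine Continuous.integrable_of_hasCompactSupport ?_ <|
    HasCompactSupport.intro (isCompact_Icc (a := min x.1 y.1) (b := max x.2 y.2)) fun t ht => ?_
  · exact ((continuous_tent x).sub (continuous_tent y)).abs.rpow_const fun _ => Or.inr hq.le
  · have hx : t ∉ Icc x.1 x.2 := fun h => ht ⟨min_le_of_left_le h.1, le_max_of_le_left h.2⟩
    have hy : t ∉ Icc y.1 y.2 := fun h => ht ⟨min_le_of_right_le h.1, le_max_of_le_right h.2⟩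
    rw [tent_eq_zero_of_notMem hx, tent_eq_zero_of_notMem hy, sub_zero, abs_zero,
      Real.zero_rpow hq.ne']

lemma landscape_singleton_one (z : ℝ × ℝ) (t : ℝ) : landscape {z} 1 t = tent z t := by
  simp [landscape, tent]

lemma landscape_singleton_add_two (z : ℝ × ℝ) (k : ℕ) (t : ℝ) : landscape {z} (k + 2) t = 0 := by
  simp [landscape]

lemma landscapeDist_singleton {q : ℝ} (hq : q ≠ 0) (x y : ℝ × ℝ) :
    landscapeDist q {x} {y} = (∫ t, |tent x t - tent y t| ^ q) ^ (1 / q) := by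
  rw [landscapeDist, tsum_eq_single 0]
  · simp only [zero_add, landscape_singleton_one]
  · rintro (_ | k) hk
    · exact absurd rfl hk
    · simp [landscape_singleton_add_two, Real.zero_rpow hq]

lemma rpow_le_landscapeDist_singleton_shift {q : ℝ} (hq : 0 < q) {b d : ℝ} (hbd : b + 2 ≤ d) :
    ((d - b) / 2 - 1) ^ (1 / q) ≤ landscapeDist q {(b, d)} {(b + 1, d)} := by
  rw [landscapeDist_singleton hq.ne']
  refine Real.rpow_le_rpow (by linarith) ?_ (by positivity)
  have hone : ∀ t ∈ Icc (b + 1) ((b + d) / 2), 1 ≤ |tent (b, d) t - tent (b + 1, d) t| ^ q := by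
    intro t ht
    rw [tent_sub_tent_of_mem_Icc (by linarith) ht]
    norm_num
  have hint := integrable_abs_tent_sub_tent_rpow hq (b, d) (b + 1, d)
  calc (d - b) / 2 - 1 = volume.real (Icc (b + 1) ((b + d) / 2)) • (1 : ℝ) := by
        rw [smul_eq_mul, mul_one, Real.volume_real_Icc_of_le (by linarith)]
        ring
    _ ≤ ∫ t in Icc (b + 1) ((b + d) / 2), |tent (b, d) t - tent (b + 1, d) t| ^ q :=
        setIntegral_ge_of_const_le measurableSet_Icc measure_Icc_lt_top.ne hone hint.integrableOn
    _ ≤ ∫ t, |tent (b, d) t - tent (b + 1, d) t| ^ q :=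
        setIntegral_le_integral hint (Filter.Eventually.of_forall fun _ => by positivity)

end Landscape

/-- For every `p ∈ [1,∞]` and `q ∈ [1,∞)`, the persistence landscape map
is not Hölder continuous from `(diagrams, W_p)` to `(landscapes, L^q)`: for all `C > 0` and
`α > 0` there are persistence diagrams `X`, `Y` with
`‖λ_X − λ_Y‖_q > C · W_p(X,Y)^α`. -/
theorem landscapes_not_holder
    (p : ℝ≥0∞) (hp : 1 ≤ p) (q : ℝ) (hq : 1 ≤ q)
    (C α : ℝ) (hC : 0 < C) (hα : 0 < α) :
    ∃ X Y : Multiset (ℝ × ℝ), IsDiagram X ∧ IsDiagram Y ∧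
      C * wassersteinDist p X Y ^ α < landscapeDist q X Y := by
  have hq0 : 0 < q := one_pos.trans_le hq
  set A : ℝ := 2 * C ^ q + 4
  have hCq : 0 < C ^ q := Real.rpow_pos_of_pos hC q
  refine ⟨{(0, A)}, {(1, A)}, isDiagram_singleton (by positivity),
    isDiagram_singleton (by dsimp only; linarith), ?_⟩
  have hW : wassersteinDist p {(0, A)} {(1, A)} ≤ 1 := by
    simpa only [zero_add] using
      wassersteinDist_singleton_shift_le_one (one_pos.trans_le hp).ne' (0 : ℝ) A
  have hL : (A / 2 - 1) ^ (1 / q) ≤ landscapeDist q {(0, A)} {(1, A)} := by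
    simpa only [zero_add, sub_zero] using
      rpow_le_landscapeDist_singleton_shift hq0 (b := 0) (d := A) (by linarith)
  calc C * wassersteinDist p {(0, A)} {(1, A)} ^ α
      ≤ C := mul_le_of_le_one_right hC.le
        (Real.rpow_le_one (wassersteinDist_nonneg _ _ _) hW hα.le)
    _ = (C ^ q) ^ (1 / q) := by rw [one_div, Real.rpow_rpow_inv hC.le hq0.ne']
    _ < (A / 2 - 1) ^ (1 / q) := by gcongr; linarith
    _ ≤ landscapeDist q {(0, A)} {(1, A)} := hL
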